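/- arXiv:2010.04104 — 2 statements merged into one kernel-verified Lean document; each statement's English description precedes it below -/
import Mathlib

section
/- If d* is the element of minimal Euclidean norm in the convex hull of the gradients {∇ℓ₁(θ), ..., ∇ℓ_m(θ)} and d* ≠ 0, then for every i, ∇ℓᵢ(θ)ᵀ d* ≥ ‖d*‖², so −d* is a descent direction for all objectives (each directional derivative along −d* is ≤ −‖d*‖² < 0). -/
open scoped RealInnerProductSpace

/-- The minimal-norm element `d*` of the convex hull of the gradients satisfies
`⟪∇ℓᵢ(θ), d*⟫ ≥ ‖d*‖²` for every `i`, so `−d*` is a common descent direction. -/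
theorem mgda_min_norm_descent {n m : ℕ}
    (g : Fin m → EuclideanSpace ℝ (Fin n)) (dstar : EuclideanSpace ℝ (Fin n))
    (hmem : ∃ β : Fin m → ℝ, (∀ i, 0 ≤ β i) ∧ (∑ i, β i = 1) ∧ dstar = ∑ i, β i • g i)
    (hmin : ∀ β : Fin m → ℝ, (∀ i, 0 ≤ β i) → (∑ i, β i = 1) →
      ‖dstar‖ ≤ ‖∑ i, β i • g i‖)
    (hne : dstar ≠ 0) :
    ∀ i, ⟪g i, dstar⟫ ≥ ‖dstar‖ ^ 2 ∧ ⟪g i, -dstar⟫ ≤ -‖dstar‖ ^ 2 ∧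
      (-‖dstar‖ ^ 2 : ℝ) < 0 := by
  intro i
  obtain ⟨β, hβ0, hβ1, hβd⟩ := hmem
  -- key : ⟪dstar, g i - dstar⟫ ≥ 0
  have key : 0 ≤ ⟪dstar, g i - dstar⟫ := by
    set w := g i - dstar with hw
    by_contra hc
    push_neg at hc
    have hwne : (0:ℝ) < ‖w‖ ^ 2 := by
      rcases eq_or_ne w 0 with h | h
      · rw [h] at hc; simp [inner_zero_right] at hc
      · exact pow_pos (norm_pos_iff.mpr h) 2
    set c : ℝ := ⟪dstar, w⟫ with hcdef
    set t : ℝ := min 1 (-c / ‖w‖ ^ 2) with ht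
    have htpos : 0 < t := lt_min one_pos (div_pos (by linarith) hwne)
    have ht1 : t ≤ 1 := min_le_left _ _
    have ht2 : t ≤ -c / ‖w‖ ^ 2 := min_le_right _ _
    -- the point (1-t) dstar + t (g i) lies in the hull
    set β' : Fin m → ℝ := fun j => (1 - t) * β j + t * (if j = i then 1 else 0)
    have hβ'0 : ∀ j, 0 ≤ β' j := by
      intro j
      exact add_nonneg (mul_nonneg (by linarith) (hβ0 j))
        (mul_nonneg htpos.le (by positivity))
    have hβ'1 : ∑ j, β' j = 1 := by
      simp only [β', Finset.sum_add_distrib, ← Finset.mul_sum, hβ1,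
        Finset.sum_ite_eq' Finset.univ i (fun _ => (1:ℝ))]
      simp
    have hsum : ∑ j, β' j • g j = dstar + t • w := by
      simp only [β', add_smul, Finset.sum_add_distrib, mul_smul, ← Finset.smul_sum, ← hβd]
      have : ∑ j, (if j = i then (1:ℝ) else 0) • g j = g i := by
        rw [Finset.sum_eq_single i]
        · simp
        · intro b _ hb; simp [hb]
        · simp
      rw [this, hw]
      module
    have hle := hmin β' hβ'0 hβ'1
    rw [hsum] at hle
    have hsq : ‖dstar‖ ^ 2 ≤ ‖dstar + t • w‖ ^ 2 :=
      pow_le_pow_left₀ (norm_nonneg dstar) hle 2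
    rw [norm_add_sq_real, real_inner_smul_right, norm_smul, Real.norm_eq_abs,
      abs_of_pos htpos] at hsq
    have h2 : 0 ≤ 2 * c + t * ‖w‖ ^ 2 := by
      have h0 : 0 ≤ t * (2 * c + t * ‖w‖ ^ 2) := by nlinarith [hsq]
      exact nonneg_of_mul_nonneg_right h0 htpos
    have ht3 : t * ‖w‖ ^ 2 ≤ -c := (le_div_iff₀ hwne).mp ht2
    linarith
  have hinner : ⟪g i, dstar⟫ ≥ ‖dstar‖ ^ 2 := by
    have : ⟪dstar, g i - dstar⟫ = ⟪g i, dstar⟫ - ‖dstar‖ ^ 2 := by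
      rw [inner_sub_right, real_inner_self_eq_norm_sq, real_inner_comm]
    linarith [key, this ▸ key]
  have hpos : (0:ℝ) < ‖dstar‖ ^ 2 := by
    have : 0 < ‖dstar‖ := norm_pos_iff.mpr hne
    positivity
  refine ⟨hinner, ?_, by linarith⟩
  rw [inner_neg_right]; linarith
end

section
/- For the two objectives ℓ₁(θ) = 1 − exp(−‖θ − a‖²) and ℓ₂(θ) = 1 − exp(−‖θ + a‖²) with ‖a‖ = 1, any θ not lying on the segment between −a and a is Pareto dominated by its metric projection onto that segment. -/
/-!
The segment `[-a, a]` is convex, so the nearest point `p` to `θ` satisfies the variational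
inequality `⟪θ - p, q - p⟫ ≤ 0` for every `q` in it. Expanding `‖θ - q‖²` around `p` then gives
`‖θ - q‖² ≥ ‖θ - p‖² + ‖p - q‖² > ‖p - q‖²` as soon as `θ ≠ p`. Taking `q = ±a` shows that the
projection is strictly closer to both anchors, and `r ↦ 1 - exp (-r²)` is strictly increasing on
`r ≥ 0`.
-/

open Set
open scoped RealInnerProductSpace

theorem convex_setOf_exists_smul {E : Type*} [AddCommGroup E] [Module ℝ E]
    {I : Set ℝ} (hI : Convex ℝ I) (a : E) : Convex ℝ {x : E | ∃ s : ℝ, s ∈ I ∧ x = s • a} := by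
  have himage : {x : E | ∃ s : ℝ, s ∈ I ∧ x = s • a} = (fun s : ℝ => s • a) '' I := by
    ext x
    simp only [mem_ofPred_eq, mem_image, eq_comm]
  rw [himage]
  exact hI.is_linear_image (IsLinearMap.isLinearMap_smul' a)

section NearestPoint

variable {F : Type*} [NormedAddCommGroup F] [InnerProductSpace ℝ F]

theorem Convex.real_inner_sub_nearest_le_zero {K : Set F} (hK : Convex ℝ K) {θ p : F}
    (hp : p ∈ K) (hproj : ∀ q ∈ K, ‖θ - p‖ ≤ ‖θ - q‖) {q : F} (hq : q ∈ K) :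
    ⟪θ - p, q - p⟫ ≤ 0 := by
  have : Nonempty K := ⟨⟨p, hp⟩⟩
  have hinf : ‖θ - p‖ = ⨅ w : K, ‖θ - w‖ :=
    le_antisymm (le_ciInf fun w => hproj w w.2)
      (ciInf_le ⟨0, fun _ ⟨_, h⟩ => h ▸ norm_nonneg _⟩ (⟨p, hp⟩ : K))
  exact (norm_eq_iInf_iff_real_inner_le_zero hK hp).mp hinf q hq

theorem Convex.norm_sub_lt_of_nearest {K : Set F} (hK : Convex ℝ K) {θ p : F}
    (hp : p ∈ K) (hproj : ∀ q ∈ K, ‖θ - p‖ ≤ ‖θ - q‖) (hθp : θ ≠ p) {q : F} (hq : q ∈ K) :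
    ‖p - q‖ < ‖θ - q‖ := by
  have hexpand : ‖θ - q‖ ^ 2 = ‖θ - p‖ ^ 2 - 2 * ⟪θ - p, q - p⟫ + ‖p - q‖ ^ 2 := by
    rw [show θ - q = (θ - p) + (p - q) by abel, norm_add_sq_real,
      show p - q = -(q - p) by abel, inner_neg_right]
    ring
  have hinner := hK.real_inner_sub_nearest_le_zero hp hproj hq
  have hpos : 0 < ‖θ - p‖ := norm_pos_iff.mpr (sub_ne_zero.mpr hθp)
  exact lt_of_pow_lt_pow_left₀ 2 (norm_nonneg _) (by nlinarith)

end NearestPoint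

theorem one_sub_exp_neg_sq_lt_one_sub_exp_neg_sq {x y : ℝ} (hx : 0 ≤ x) (hxy : x < y) :
    1 - Real.exp (-x ^ 2) < 1 - Real.exp (-y ^ 2) := by
  have hsq : x ^ 2 < y ^ 2 := pow_lt_pow_left₀ hxy hx two_ne_zero
  have hexp : Real.exp (-y ^ 2) < Real.exp (-x ^ 2) := Real.exp_lt_exp.mpr (by linarith)
  linarith

theorem projection_dominates_general {d : ℕ}
    (a : EuclideanSpace ℝ (Fin d))
    (ℓ₁ ℓ₂ : EuclideanSpace ℝ (Fin d) → ℝ)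
    (hℓ₁ : ℓ₁ = fun θ => 1 - Real.exp (-‖θ - a‖ ^ 2))
    (hℓ₂ : ℓ₂ = fun θ => 1 - Real.exp (-‖θ + a‖ ^ 2))
    (seg : Set (EuclideanSpace ℝ (Fin d)))
    (hseg : seg = {x | ∃ s : ℝ, s ∈ Set.Icc (-1 : ℝ) 1 ∧ x = s • a})
    (θ p : EuclideanSpace ℝ (Fin d)) (hθ : θ ∉ seg)
    (hp : p ∈ seg) (hproj : ∀ q ∈ seg, ‖θ - p‖ ≤ ‖θ - q‖) :
    (ℓ₁ p ≤ ℓ₁ θ ∧ ℓ₂ p ≤ ℓ₂ θ) ∧ (ℓ₁ p < ℓ₁ θ ∨ ℓ₂ p < ℓ₂ θ) := by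
  have hconv : Convex ℝ seg := hseg ▸ convex_setOf_exists_smul (convex_Icc _ _) a
  have ha_mem : a ∈ seg := hseg ▸ ⟨1, by norm_num, (one_smul ℝ a).symm⟩
  have hneg_mem : -a ∈ seg := hseg ▸ ⟨-1, by norm_num, (neg_one_smul ℝ a).symm⟩
  have hθp : θ ≠ p := fun h => hθ (h ▸ hp)
  have h₁ : ℓ₁ p < ℓ₁ θ := by
    subst hℓ₁
    exact one_sub_exp_neg_sq_lt_one_sub_exp_neg_sq (norm_nonneg _)
      (hconv.norm_sub_lt_of_nearest hp hproj hθp ha_mem)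
  have h₂ : ℓ₂ p < ℓ₂ θ := by
    subst hℓ₂
    simpa only [sub_neg_eq_add] using one_sub_exp_neg_sq_lt_one_sub_exp_neg_sq (norm_nonneg _)
      (hconv.norm_sub_lt_of_nearest hp hproj hθp hneg_mem)
  exact ⟨⟨h₁.le, h₂.le⟩, Or.inl h₁⟩

/-- Any point off the segment between `−a` and `a` is Pareto dominated by its
metric projection onto that segment. -/
theorem projection_dominates {d : ℕ}
    (a : EuclideanSpace ℝ (Fin d)) (ha : ‖a‖ = 1)
    (ℓ₁ ℓ₂ : EuclideanSpace ℝ (Fin d) → ℝ)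
    (hℓ₁ : ℓ₁ = fun θ => 1 - Real.exp (-‖θ - a‖ ^ 2))
    (hℓ₂ : ℓ₂ = fun θ => 1 - Real.exp (-‖θ + a‖ ^ 2))
    (seg : Set (EuclideanSpace ℝ (Fin d)))
    (hseg : seg = {x | ∃ s : ℝ, s ∈ Set.Icc (-1 : ℝ) 1 ∧ x = s • a})
    (θ p : EuclideanSpace ℝ (Fin d)) (hθ : θ ∉ seg)
    (hp : p ∈ seg) (hproj : ∀ q ∈ seg, ‖θ - p‖ ≤ ‖θ - q‖) :
    (ℓ₁ p ≤ ℓ₁ θ ∧ ℓ₂ p ≤ ℓ₂ θ) ∧ (ℓ₁ p < ℓ₁ θ ∨ ℓ₂ p < ℓ₂ θ) :=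
  projection_dominates_general a ℓ₁ ℓ₂ hℓ₁ hℓ₂ seg hseg θ p hθ hp hproj
end
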